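/- arXiv:2605.06751 — 3 statements merged into one kernel-verified Lean document; each statement's English description precedes it below -/
import Mathlib

section
/- (Mutual-information security implies distinguishing security.) (Adv^{DS})² ≤ 2·Adv^{MIS}. In particular, for any u₀, u₁ ∈ 𝒰 and V ∈ 𝒱, if U is uniformly distributed on {u₀,u₁} then I(U;Z_V) ≥ (1/2)·SD(P_{V,u₀}, P_{V,u₁})². -/
open scoped BigOperators Classical

noncomputable section

/-- A probability distribution on a finite type. -/
def IsProbDist {α : Type} [Fintype α] (p : α → ℝ) : Prop :=
  (∀ a, 0 ≤ p a) ∧ (∑ a, p a) = 1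

/-- Total variation distance between two distributions on a finite set. -/
def SD {Z : Type} [Fintype Z] (p q : Z → ℝ) : ℝ := (1/2) * ∑ z, |p z - q z|

/-- Distinguishing advantage: the maximum over message pairs `(u₀,u₁)` and channels `V` of
the total variation distance between the output distributions `P_{V,u₀}` and `P_{V,u₁}`. -/
def AdvDSfam {U Z V : Type} [Fintype U] [Fintype Z] (P : V → U → Z → ℝ) : ℝ :=
  sSup {r : ℝ | ∃ (u₀ u₁ : U) (v : V), r = SD (P v u₀) (P v u₁)}

/-- Semantic advantage: the supremum over message distributions `pU`, finite types `T`,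
functions `f : U → T`, channels `V` and adversaries `𝒜 : Z → T` of
`Pr{𝒜(Z_V) = f(U)} − max_t Pr{f(U) = t}`. -/
def AdvSSfam {U Z V : Type} [Fintype U] [Fintype Z] (P : V → U → Z → ℝ) : ℝ :=
  sSup {r : ℝ | ∃ (pU : U → ℝ), IsProbDist pU ∧
    ∃ (T : Type) (_ : Fintype T) (f : U → T) (v : V) (A : Z → T),
      r = (∑ u, ∑ z, pU u * P v u z * (if A z = f u then 1 else 0))
          - sSup {q : ℝ | ∃ t : T, q = ∑ u, (if f u = t then pU u else 0)}}

/-- Shannon mutual information (natural logarithm) of the joint law `p u * q u z`. -/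
def mutualInfo {U Z : Type} [Fintype U] [Fintype Z] (p : U → ℝ) (q : U → Z → ℝ) : ℝ :=
  ∑ u, ∑ z, p u * q u z * Real.log (q u z / (∑ v, p v * q v z))

/-- Mutual-information advantage: the supremum over message distributions `pU` and
channels `V` of the mutual information `I(U;Z_V)`. -/
def AdvMISfam {U Z V : Type} [Fintype U] [Fintype Z] (P : V → U → Z → ℝ) : ℝ :=
  sSup {r : ℝ | ∃ (pU : U → ℝ), IsProbDist pU ∧ ∃ v : V, r = mutualInfo pU (fun u => P v u)}

/-
For `U` uniform on two messages, `I(U;Z)` is the Jensen–Shannon divergence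
`½ ∑_z (p₀ log (p₀/m) + p₁ log (p₁/m))` with `m = (p₀+p₁)/2`. Writing `p₀ = m(1+s)`,
`p₁ = m(1-s)`, the elementary bound `(1+s) log (1+s) + (1-s) log (1-s) ≥ s²` bounds each summand
below by `(p₀-p₁)²/(2(p₀+p₁))`, and Cauchy–Schwarz (in Sedrakyan's form, with `∑ (p₀+p₁) = 2`)
turns the sum of these into `SD(p₀,p₁)²`. The distinguishing advantage is attained by some pair
`u₀, u₁`, and the uniform prior on `{u₀, u₁}` competes in the supremum defining `Adv^MIS`.
-/

open Real Finset

theorem two_mul_le_log_one_add_sub_log_one_sub {s : ℝ} (h0 : 0 ≤ s) (h1 : s < 1) :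
    2 * s ≤ log (1 + s) - log (1 - s) := by
  have hs := hasSum_log_sub_log_of_abs_lt_one (abs_lt.2 ⟨by linarith, h1⟩)
  simpa using le_hasSum hs 0 fun k _ => by positivity

theorem sq_le_mul_log_one_add_add_mul_log_one_sub {s : ℝ} (h0 : 0 ≤ s) (h1 : s ≤ 1) :
    s ^ 2 ≤ (1 + s) * log (1 + s) + (1 - s) * log (1 - s) := by
  set ψ : ℝ → ℝ := fun x => (1 + x) * log (1 + x) + (1 - x) * log (1 - x) - x ^ 2
  have hψ : MonotoneOn ψ (Set.Icc 0 1) := by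
    -- `x * log x` is continuous at `0` (where `log 0 = 0`), so the endpoint `s = 1` is covered.
    have hcont : Continuous ψ := by
      have := continuous_mul_log
      fun_prop
    refine monotoneOn_of_hasDerivWithinAt_nonneg (convex_Icc 0 1) hcont.continuousOn
      (f' := fun x => log (1 + x) - log (1 - x) - 2 * x) (fun x hx => ?_) fun x hx => ?_ <;>
      rw [interior_Icc] at hx <;> obtain ⟨hx0, hx1⟩ := hx
    · have hadd := (hasDerivAt_mul_log (x := 1 + x) (by linarith)).comp x
        ((hasDerivAt_id x).const_add 1)
      have hsub := (hasDerivAt_mul_log (x := 1 - x) (by linarith)).comp x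
        ((hasDerivAt_id x).const_sub 1)
      exact (((hadd.add hsub).sub (hasDerivAt_pow 2 x)).congr_deriv
        (by simp; ring)).hasDerivWithinAt
    · linarith [two_mul_le_log_one_add_sub_log_one_sub hx0.le hx1]
  simpa [ψ] using hψ ⟨le_rfl, zero_le_one⟩ ⟨h0, h1⟩ h0

theorem sq_sub_div_le_mul_log_add_mul_log {a b : ℝ} (ha : 0 ≤ a) (hb : 0 ≤ b) :
    (a - b) ^ 2 / (2 * (a + b)) ≤
      a * log (a / ((a + b) / 2)) + b * log (b / ((a + b) / 2)) := by
  wlog hba : b ≤ a generalizing a b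
  · convert this hb ha (le_of_not_ge hba) using 1 <;> ring_nf
  rcases (add_nonneg ha hb).eq_or_lt with hab | hab
  · obtain ⟨rfl, rfl⟩ : a = 0 ∧ b = 0 := ⟨by linarith, by linarith⟩
    simp
  have hm : (a + b) / 2 ≠ 0 := by positivity
  have key := sq_le_mul_log_one_add_add_mul_log_one_sub
    (div_nonneg (sub_nonneg.2 hba) hab.le) ((div_le_one hab).2 (by linarith))
  have hsq : (a - b) ^ 2 / (2 * (a + b)) = (a + b) / 2 * ((a - b) / (a + b)) ^ 2 := by
    field_simp
  have ha' : a / ((a + b) / 2) = 1 + (a - b) / (a + b) := by field_simp; ring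
  have hb' : b / ((a + b) / 2) = 1 - (a - b) / (a + b) := by field_simp; ring
  rw [hsq, ha', hb']
  generalize (a - b) / (a + b) = s at ha' hb' key
  calc (a + b) / 2 * s ^ 2
      ≤ (a + b) / 2 * ((1 + s) * log (1 + s) + (1 - s) * log (1 - s)) := by gcongr
    _ = a * log (1 + s) + b * log (1 - s) := by
      linear_combination
        -log (1 + s) * (div_eq_iff hm).1 ha' - log (1 - s) * (div_eq_iff hm).1 hb'

theorem sq_sum_div_le_sum_sq_div_of_nonneg {ι : Type*} (s : Finset ι) (f g : ι → ℝ)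
    (hg : ∀ i ∈ s, 0 ≤ g i) (hfg : ∀ i ∈ s, g i = 0 → f i = 0) :
    (∑ i ∈ s, f i) ^ 2 / ∑ i ∈ s, g i ≤ ∑ i ∈ s, f i ^ 2 / g i := by
  have hpos : ∀ i ∈ s, g i ≠ 0 → 0 < g i := fun i hi h => (hg i hi).lt_of_ne' h
  rw [← sum_filter_of_ne fun i hi hf => hpos i hi fun h => hf (hfg i hi h),
    ← sum_filter_of_ne fun i hi hgi => hpos i hi hgi,
    ← sum_filter_of_ne fun i hi hq => hpos i hi fun h => hq (by simp [h])]
  exact sq_sum_div_le_sum_sq_div _ f fun i hi => (mem_filter.1 hi).2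

def jensenShannon {Z : Type} [Fintype Z] (p q : Z → ℝ) : ℝ :=
  (∑ z, (p z * log (p z / ((p z + q z) / 2)) + q z * log (q z / ((p z + q z) / 2)))) / 2

theorem sq_SD_le_two_mul_jensenShannon {Z : Type} [Fintype Z] {p q : Z → ℝ}
    (hp : IsProbDist p) (hq : IsProbDist q) :
    SD p q ^ 2 ≤ 2 * jensenShannon p q := by
  calc SD p q ^ 2 = (∑ z, |p z - q z|) ^ 2 / (∑ z, (p z + q z)) / 2 := by
        rw [sum_add_distrib, hp.2, hq.2, SD]; ring
    _ ≤ (∑ z, |p z - q z| ^ 2 / (p z + q z)) / 2 := by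
        gcongr
        refine sq_sum_div_le_sum_sq_div_of_nonneg _ _ _ (fun z _ => add_nonneg (hp.1 z) (hq.1 z))
          fun z _ h => ?_
        rw [abs_eq_zero, sub_eq_zero]
        linarith [hp.1 z, hq.1 z]
    _ = ∑ z, (p z - q z) ^ 2 / (2 * (p z + q z)) := by
        rw [sum_div]; simp only [sq_abs, div_div, mul_comm]
    _ ≤ 2 * jensenShannon p q := by
        rw [jensenShannon, mul_div_cancel₀ _ two_ne_zero]
        exact sum_le_sum fun z _ => sq_sub_div_le_mul_log_add_mul_log (hp.1 z) (hq.1 z)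

theorem mutualInfo_uniform_bool {Z : Type} [Fintype Z] (q : Bool → Z → ℝ) :
    mutualInfo (fun _ => (1 : ℝ) / 2) q = jensenShannon (q false) (q true) := by
  simp only [mutualInfo, jensenShannon, Fintype.sum_bool, sum_div, ← sum_add_distrib]
  refine sum_congr rfl fun z _ => ?_
  ring_nf

theorem half_mul_sq_SD_le_mutualInfo_uniform_bool {Z : Type} [Fintype Z] {q : Bool → Z → ℝ}
    (h0 : IsProbDist (q false)) (h1 : IsProbDist (q true)) :
    1 / 2 * SD (q false) (q true) ^ 2 ≤ mutualInfo (fun _ => (1 : ℝ) / 2) q := by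
  rw [mutualInfo_uniform_bool]
  linarith [sq_SD_le_two_mul_jensenShannon h0 h1]

theorem mutualInfo_le_card {U Z : Type} [Fintype U] [Fintype Z] {p : U → ℝ} {q : U → Z → ℝ}
    (hp : ∀ u, 0 ≤ p u) (hq : ∀ u, IsProbDist (q u)) :
    mutualInfo p q ≤ Fintype.card U := by
  have hterm : ∀ u z, p u * q u z * log (q u z / ∑ v, p v * q v z) ≤ q u z := by
    intro u z
    have hpq : 0 ≤ p u * q u z := mul_nonneg (hp u) ((hq u).1 z)
    have hle : p u * q u z ≤ ∑ v, p v * q v z :=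
      single_le_sum (f := fun v => p v * q v z) (fun v _ => mul_nonneg (hp v) ((hq v).1 z))
        (mem_univ u)
    calc p u * q u z * log (q u z / ∑ v, p v * q v z)
        ≤ p u * q u z * (q u z / ∑ v, p v * q v z) :=
          mul_le_mul_of_nonneg_left (log_le_self (div_nonneg ((hq u).1 z) (hpq.trans hle))) hpq
      _ = q u z * (p u * q u z / ∑ v, p v * q v z) := by ring
      _ ≤ q u z * 1 :=
          mul_le_mul_of_nonneg_left (div_le_one_of_le₀ hle (hpq.trans hle)) ((hq u).1 z)
      _ = q u z := mul_one _
  calc mutualInfo p q ≤ ∑ u, ∑ z, q u z :=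
        sum_le_sum fun u _ => sum_le_sum fun z _ => hterm u z
    _ = Fintype.card U := by simp [(hq _).2]

def pushforward {B U : Type} [Fintype B] (f : B → U) (p : B → ℝ) (u : U) : ℝ :=
  ∑ b, if f b = u then p b else 0

theorem isProbDist_pushforward {B U : Type} [Fintype B] [Fintype U] {p : B → ℝ}
    (hp : IsProbDist p) (f : B → U) : IsProbDist (pushforward f p) := by
  refine ⟨fun u => sum_nonneg fun b _ => ?_, ?_⟩
  · split_ifs
    exacts [hp.1 b, le_rfl]
  · simp only [pushforward]
    rw [sum_comm]
    simpa using hp.2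

theorem mutualInfo_pushforward {B U Z : Type} [Fintype B] [Fintype U] [Fintype Z] (f : B → U)
    (p : B → ℝ) (q : U → Z → ℝ) :
    mutualInfo (pushforward f p) q = mutualInfo p fun b => q (f b) := by
  have hmix : ∀ z, ∑ u, pushforward f p u * q u z = ∑ b, p b * q (f b) z := fun z => by
    simp only [pushforward, sum_mul, ite_mul, zero_mul]
    rw [sum_comm]
    simp
  simp only [mutualInfo, hmix, mul_assoc, ← mul_sum]
  simp only [pushforward, sum_mul, ite_mul, zero_mul]
  rw [sum_comm]
  simp

theorem mutualInfo_le_AdvMISfam {U Z V : Type} [Fintype U] [Fintype Z] {P : V → U → Z → ℝ}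
    (hP : ∀ v u, IsProbDist (P v u)) {pU : U → ℝ} (hpU : IsProbDist pU) (v : V) :
    mutualInfo pU (fun u => P v u) ≤ AdvMISfam P :=
  le_csSup ⟨Fintype.card U, by
    rintro r ⟨p, hp, w, rfl⟩
    exact mutualInfo_le_card hp.1 (hP w)⟩ ⟨pU, hpU, v, rfl⟩

theorem exists_AdvDSfam_eq_SD {U Z V : Type} [Fintype U] [Fintype Z] [Fintype V] [Nonempty U]
    [Nonempty V] (P : V → U → Z → ℝ) :
    ∃ (u₀ u₁ : U) (v : V), AdvDSfam P = SD (P v u₀) (P v u₁) := by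
  have hrange : {r : ℝ | ∃ (u₀ u₁ : U) (v : V), r = SD (P v u₀) (P v u₁)} =
      Set.range fun x : U × U × V => SD (P x.2.2 x.1) (P x.2.2 x.2.1) := by
    ext r
    simp [eq_comm]
  obtain ⟨⟨u₀, u₁, v⟩, h⟩ : AdvDSfam P ∈
      Set.range fun x : U × U × V => SD (P x.2.2 x.1) (P x.2.2 x.2.1) := by
    rw [AdvDSfam, hrange]
    exact (Set.range_nonempty _).csSup_mem (Set.finite_range _)
  exact ⟨u₀, u₁, v, h.symm⟩

theorem mis_implies_ds_general
    (U Z V : Type) [Fintype U] [Fintype Z] [Fintype V]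
    [Nonempty U] [Nonempty V]
    (P : V → U → Z → ℝ) (hP : ∀ v u, IsProbDist (P v u)) :
    (AdvDSfam P) ^ 2 ≤ 2 * AdvMISfam P ∧
    ∀ (u₀ u₁ : U) (v : V),
      (1/2) * (SD (P v u₀) (P v u₁)) ^ 2 ≤
        mutualInfo (fun _ : Bool => (1:ℝ)/2) (fun b => P v (if b then u₁ else u₀)) := by
  have hpair : ∀ (u₀ u₁ : U) (v : V), (1/2) * (SD (P v u₀) (P v u₁)) ^ 2 ≤
      mutualInfo (fun _ : Bool => (1:ℝ)/2) (fun b => P v (if b then u₁ else u₀)) :=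
    fun u₀ u₁ v => by
      simpa using half_mul_sq_SD_le_mutualInfo_uniform_bool
        (q := fun b => P v (if b then u₁ else u₀))
        (by simpa using hP v u₀) (by simpa using hP v u₁)
  refine ⟨?_, hpair⟩
  obtain ⟨u₀, u₁, v, hDS⟩ := exists_AdvDSfam_eq_SD P
  have huniform : IsProbDist fun _ : Bool => (1 : ℝ) / 2 := ⟨fun _ => by norm_num, by norm_num⟩
  have hMIS := mutualInfo_le_AdvMISfam hP
    (isProbDist_pushforward huniform fun b => if b then u₁ else u₀) v
  rw [mutualInfo_pushforward] at hMIS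
  rw [hDS]
  linarith [hpair u₀ u₁ v]

/-- **Statement 10 (Mutual-information security implies distinguishing security).**
`(Adv^DS)² ≤ 2·Adv^MIS`; in particular, for any `u₀, u₁ ∈ 𝒰` and `V ∈ 𝒱`, if `U` is
uniformly distributed on `{u₀,u₁}` then `I(U;Z_V) ≥ (1/2)·SD(P_{V,u₀}, P_{V,u₁})²`. -/
theorem mis_implies_ds
    (U Z V : Type) [Fintype U] [Fintype Z] [Fintype V]
    [Nonempty U] [Nonempty Z] [Nonempty V]
    (P : V → U → Z → ℝ) (hP : ∀ v u, IsProbDist (P v u)) :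
    (AdvDSfam P) ^ 2 ≤ 2 * AdvMISfam P ∧
    ∀ (u₀ u₁ : U) (v : V),
      (1/2) * (SD (P v u₀) (P v u₁)) ^ 2 ≤
        mutualInfo (fun _ : Bool => (1:ℝ)/2) (fun b => P v (if b then u₁ else u₀)) :=
  mis_implies_ds_general U Z V P hP

end
end

section
/- (Distinguishing security implies mutual-information security.) Suppose |𝒵| ≥ 3 and ε := Adv^{DS} > 0. Then Adv^{MIS} ≤ 2·ε·ln(|𝒵|/ε); that is, for every probability distribution P_U on 𝒰 and every V ∈ 𝒱, I(U;Z_V) ≤ 2·ε·ln(|𝒵|/ε). -/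
/-!
Write `I(U;Z) = H(P_Z) - ∑ᵤ P_U(u) H(P_{V,u})`. The output law `P_Z` is a mixture of the
`P_{V,u}`, so it lies within total variation `ε` of each of them. For two laws at total
variation `δ`, splitting `q - p` into its positive and negative parts shows
`H(q) - H(p) ≤ δ ln |𝒵| + η(δ) + δ` with `η(x) = -x ln x`: the positive part adds at most its
own entropy, at most `δ ln (|𝒵| / δ)` by Jensen, and removing the negative part costs at most
its mass, because `η(x) - η(y) ≤ y - x` for `0 ≤ x ≤ y ≤ 1`. As `ln |𝒵| ≥ 1`, this is at most
`2 ε ln (|𝒵| / ε)`.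
-/

open scoped BigOperators Classical

noncomputable section

open Finset Real

lemma Real.negMulLog_sub_negMulLog_le_sub {x y : ℝ} (hx : 0 ≤ x) (hxy : x ≤ y) (hy : y ≤ 1) :
    negMulLog x - negMulLog y ≤ y - x := by
  have hy_log : (y - x) * log y ≤ 0 :=
    mul_nonpos_of_nonneg_of_nonpos (sub_nonneg.2 hxy) (log_nonpos (hx.trans hxy) hy)
  rcases hx.eq_or_lt with rfl | hx
  · simp only [sub_zero, negMulLog]
    linarith
  · have hy0 : 0 < y := hx.trans_le hxy
    have hx_log : x * (log y - log x) ≤ y - x :=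
      calc x * (log y - log x) = x * log (y / x) := by rw [log_div hy0.ne' hx.ne']
        _ ≤ x * (y / x - 1) :=
          mul_le_mul_of_nonneg_left (log_le_sub_one_of_pos (div_pos hy0 hx)) hx.le
        _ = y - x := by field_simp
    simp only [negMulLog]
    linarith

lemma Real.negMulLog_add_le {x y : ℝ} (hx : 0 ≤ x) (hy : 0 ≤ y) :
    negMulLog (x + y) ≤ negMulLog x + negMulLog y := by
  have mul_log_le : ∀ {s t : ℝ}, 0 ≤ s → 0 ≤ t → s * log s ≤ s * log (s + t) := by
    intro s t hs ht
    rcases hs.eq_or_lt with rfl | hs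
    · simp
    · exact mul_le_mul_of_nonneg_left (log_le_log hs (by linarith)) hs.le
  have hx' := mul_log_le hx hy
  have hy' := mul_log_le hy hx
  rw [add_comm y x] at hy'
  simp only [negMulLog]
  linarith

lemma Real.negMulLog_sub_le_posPart_add_negPart {x y : ℝ} (hx : 0 ≤ x) (hx1 : x ≤ 1)
    (hy : 0 ≤ y) : negMulLog y - negMulLog x ≤ negMulLog (y - x)⁺ + (y - x)⁻ := by
  rcases le_total x y with hxy | hyx
  · rw [posPart_of_nonneg (sub_nonneg.2 hxy), negPart_of_nonneg (sub_nonneg.2 hxy)]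
    have := negMulLog_add_le hx (sub_nonneg.2 hxy)
    rw [add_sub_cancel] at this
    linarith
  · rw [posPart_of_nonpos (sub_nonpos.2 hyx), negPart_of_nonpos (sub_nonpos.2 hyx)]
    simpa using negMulLog_sub_negMulLog_le_sub hy hyx hx1

lemma Real.mul_log_div_eq {ε N : ℝ} (hN : N ≠ 0) : ε * log (N / ε) = ε * log N + negMulLog ε := by
  rcases eq_or_ne ε 0 with rfl | hε
  · simp
  · rw [log_div hN hε, negMulLog]
    ring

lemma Real.one_le_log_of_three_le {N : ℝ} (hN : 3 ≤ N) : 1 ≤ log N := by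
  rw [le_log_iff_exp_le (by linarith)]
  linarith [exp_one_lt_d9]

lemma Real.mul_log_add_negMulLog_add_self_le {δ ε N : ℝ} (hδ : 0 ≤ δ) (hδε : δ ≤ ε) (hε : ε ≤ 1)
    (hN : 1 ≤ log N) : δ * log N + negMulLog δ + δ ≤ 2 * ε * log (N / ε) := by
  have hN0 : N ≠ 0 := by rintro rfl; simp at hN; linarith
  have hε0 : 0 ≤ ε := hδ.trans hδε
  have h_neg := negMulLog_sub_negMulLog_le_sub hδ hδε hε
  have h_nonneg := negMulLog_nonneg hε0 hε
  have h1 : δ * log N ≤ ε * log N := mul_le_mul_of_nonneg_right hδε (by linarith)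
  have h2 : ε ≤ ε * log N := le_mul_of_one_le_right hε0 hN
  rw [mul_assoc, mul_log_div_eq hN0]
  linarith

section Entropy

variable {Z : Type} [Fintype Z]

lemma IsProbDist.le_one {p : Z → ℝ} (hp : IsProbDist p) (z : Z) : p z ≤ 1 :=
  hp.2 ▸ single_le_sum (fun z _ => hp.1 z) (mem_univ z)

def shannonEntropy (p : Z → ℝ) : ℝ := ∑ z, negMulLog (p z)

lemma sum_negMulLog_le [Nonempty Z] {a : Z → ℝ} (ha : ∀ z, 0 ≤ a z) :
    ∑ z, negMulLog (a z) ≤ (∑ z, a z) * log (Fintype.card Z) + negMulLog (∑ z, a z) := by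
  set N : ℝ := (Fintype.card Z : ℝ)
  have hN : 0 < N := by positivity
  have jensen := concaveOn_negMulLog.le_map_sum (t := univ) (w := fun _ => N⁻¹) (p := a)
    (fun _ _ => by positivity) (by simp [N, hN.ne']) (fun z _ => ha z)
  simp only [smul_eq_mul, ← mul_sum] at jensen
  rw [negMulLog_mul, negMulLog, log_inv] at jensen
  have := mul_le_mul_of_nonneg_left jensen hN.le
  field_simp at this
  linarith

lemma SD_nonneg (p q : Z → ℝ) : 0 ≤ SD p q :=
  mul_nonneg (by norm_num) (sum_nonneg fun _ _ => abs_nonneg _)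

lemma SD_le_one {p q : Z → ℝ} (hp : IsProbDist p) (hq : IsProbDist q) : SD p q ≤ 1 := by
  have h : ∀ z, |p z - q z| ≤ p z + q z := fun z =>
    abs_sub_le_of_nonneg_of_le (hp.1 z) (le_add_of_nonneg_right (hq.1 z)) (hq.1 z)
      (le_add_of_nonneg_left (hp.1 z))
  calc SD p q ≤ 1 / 2 * ∑ z, (p z + q z) := by unfold SD; gcongr with z; exact h z
    _ = 1 := by rw [sum_add_distrib, hp.2, hq.2]; norm_num

lemma sum_posPart_and_sum_negPart_sub_eq_SD {p q : Z → ℝ} (hp : IsProbDist p)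
    (hq : IsProbDist q) :
    ∑ z, (q z - p z)⁺ = SD p q ∧ ∑ z, (q z - p z)⁻ = SD p q := by
  have h_diff : ∑ z, (q z - p z)⁺ - ∑ z, (q z - p z)⁻ = 0 := by
    rw [← sum_sub_distrib]
    simp only [posPart_sub_negPart]
    rw [sum_sub_distrib, hp.2, hq.2, sub_self]
  have h_add : ∑ z, (q z - p z)⁺ + ∑ z, (q z - p z)⁻ = 2 * SD p q := by
    simp [SD, ← sum_add_distrib, posPart_add_negPart, abs_sub_comm]
  constructor <;> linarith

lemma shannonEntropy_sub_le [Nonempty Z] {p q : Z → ℝ} (hp : IsProbDist p) (hq : IsProbDist q) :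
    shannonEntropy q - shannonEntropy p ≤
      SD p q * log (Fintype.card Z) + negMulLog (SD p q) + SD p q := by
  obtain ⟨h_pos, h_neg⟩ := sum_posPart_and_sum_negPart_sub_eq_SD hp hq
  calc shannonEntropy q - shannonEntropy p = ∑ z, (negMulLog (q z) - negMulLog (p z)) := by
        rw [shannonEntropy, shannonEntropy, sum_sub_distrib]
    _ ≤ ∑ z, (negMulLog (q z - p z)⁺ + (q z - p z)⁻) := sum_le_sum fun z _ =>
        negMulLog_sub_le_posPart_add_negPart (hp.1 z) (hp.le_one z) (hq.1 z)
    _ = ∑ z, negMulLog (q z - p z)⁺ + SD p q := by rw [sum_add_distrib, h_neg]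
    _ ≤ SD p q * log (Fintype.card Z) + negMulLog (SD p q) + SD p q := by
        grw [sum_negMulLog_le fun z => posPart_nonneg _, h_pos]

end Entropy

section MutualInformation

variable {U Z : Type} [Fintype U] [Fintype Z]

def outputDist (p : U → ℝ) (q : U → Z → ℝ) (z : Z) : ℝ := ∑ u, p u * q u z

lemma IsProbDist.outputDist {p : U → ℝ} {q : U → Z → ℝ} (hp : IsProbDist p)
    (hq : ∀ u, IsProbDist (q u)) : IsProbDist (outputDist p q) := by
  refine ⟨fun z => sum_nonneg fun u _ => mul_nonneg (hp.1 u) ((hq u).1 z), ?_⟩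
  simp only [_root_.outputDist]
  rw [sum_comm]
  simp [← mul_sum, (hq _).2, hp.2]

lemma SD_outputDist_le {p : U → ℝ} (hp : IsProbDist p) (r : Z → ℝ) (q : U → Z → ℝ) :
    SD r (outputDist p q) ≤ ∑ u, p u * SD r (q u) := by
  have h_abs : ∀ z, |r z - outputDist p q z| ≤ ∑ u, p u * |r z - q u z| := fun z =>
    calc |r z - outputDist p q z| = |∑ u, p u * (r z - q u z)| := by
          simp [_root_.outputDist, mul_sub, sum_sub_distrib, ← sum_mul, hp.2]
      _ ≤ ∑ u, |p u * (r z - q u z)| := abs_sum_le_sum_abs _ _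
      _ = ∑ u, p u * |r z - q u z| := by simp [abs_mul, abs_of_nonneg (hp.1 _)]
  calc SD r (outputDist p q) ≤ 1 / 2 * ∑ z, ∑ u, p u * |r z - q u z| := by
        unfold SD; gcongr with z; exact h_abs z
    _ = ∑ u, p u * SD r (q u) := by
        simp only [SD, mul_sum]
        rw [sum_comm]
        exact sum_congr rfl fun u _ => sum_congr rfl fun z _ => by ring

lemma mutualInfo_eq_shannonEntropy_sub {p : U → ℝ} {q : U → Z → ℝ} (hp : ∀ u, 0 ≤ p u)
    (hq : ∀ u z, 0 ≤ q u z) :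
    mutualInfo p q = shannonEntropy (outputDist p q) - ∑ u, p u * shannonEntropy (q u) := by
  have h_term : ∀ u z, p u * q u z * log (q u z / outputDist p q z)
      = p u * q u z * -log (outputDist p q z) - p u * negMulLog (q u z) := by
    intro u z
    rcases (mul_nonneg (hp u) (hq u z)).eq_or_lt with h | h
    · rw [← h]
      rcases mul_eq_zero.1 h.symm with h' | h' <;> simp [h']
    · have h_out : 0 < outputDist p q z :=
        h.trans_le (single_le_sum (fun u _ => mul_nonneg (hp u) (hq u z)) (mem_univ u))
      rw [log_div (pos_of_mul_pos_right h (hp u)).ne' h_out.ne', negMulLog]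
      ring
  have h_output : ∑ u, ∑ z, p u * q u z * -log (outputDist p q z)
      = shannonEntropy (outputDist p q) := by
    rw [sum_comm, shannonEntropy]
    refine sum_congr rfl fun z _ => ?_
    rw [← sum_mul, negMulLog, neg_mul_comm]
    rfl
  change ∑ u, ∑ z, p u * q u z * log (q u z / outputDist p q z) = _
  simp only [h_term, sum_sub_distrib, h_output, shannonEntropy, mul_sum]

lemma mutualInfo_le_of_SD_le {p : U → ℝ} {q : U → Z → ℝ} (hp : IsProbDist p)
    (hq : ∀ u, IsProbDist (q u)) (hZ : 3 ≤ Fintype.card Z) {ε : ℝ} (hε : ε ≤ 1)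
    (h_SD : ∀ u u', SD (q u) (q u') ≤ ε) :
    mutualInfo p q ≤ 2 * ε * log (Fintype.card Z / ε) := by
  have : Nonempty Z := Fintype.card_pos_iff.1 (by omega)
  have h_out := hp.outputDist hq
  have h_SD_out : ∀ u, SD (q u) (outputDist p q) ≤ ε := fun u =>
    calc SD (q u) (outputDist p q) ≤ ∑ u', p u' * SD (q u) (q u') := SD_outputDist_le hp _ _
      _ ≤ ∑ u', p u' * ε := sum_le_sum fun u' _ => mul_le_mul_of_nonneg_left (h_SD u u') (hp.1 u')
      _ = ε := by rw [← sum_mul, hp.2, one_mul]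
  have h_entropy : ∀ u, shannonEntropy (outputDist p q) - shannonEntropy (q u)
      ≤ 2 * ε * log (Fintype.card Z / ε) := fun u =>
    (shannonEntropy_sub_le (hq u) h_out).trans <|
      mul_log_add_negMulLog_add_self_le (SD_nonneg _ _) (h_SD_out u) hε
        (one_le_log_of_three_le (by exact_mod_cast hZ))
  calc mutualInfo p q
      = ∑ u, p u * (shannonEntropy (outputDist p q) - shannonEntropy (q u)) := by
        rw [mutualInfo_eq_shannonEntropy_sub hp.1 fun u => (hq u).1]
        simp only [mul_sub, sum_sub_distrib, ← sum_mul, hp.2, one_mul]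
    _ ≤ ∑ u, p u * (2 * ε * log (Fintype.card Z / ε)) :=
        sum_le_sum fun u _ => mul_le_mul_of_nonneg_left (h_entropy u) (hp.1 u)
    _ = 2 * ε * log (Fintype.card Z / ε) := by rw [← sum_mul, hp.2, one_mul]

end MutualInformation

section Advantage

variable {U Z V : Type} [Fintype U] [Fintype Z] {P : V → U → Z → ℝ}

lemma AdvDSfam_nonneg : 0 ≤ AdvDSfam P :=
  Real.sSup_nonneg <| by rintro _ ⟨u₀, u₁, v, rfl⟩; exact SD_nonneg _ _

lemma AdvDSfam_le_one (hP : ∀ v u, IsProbDist (P v u)) : AdvDSfam P ≤ 1 :=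
  Real.sSup_le (by rintro _ ⟨u₀, u₁, v, rfl⟩; exact SD_le_one (hP v u₀) (hP v u₁)) zero_le_one

lemma SD_le_AdvDSfam (hP : ∀ v u, IsProbDist (P v u)) (v : V) (u₀ u₁ : U) :
    SD (P v u₀) (P v u₁) ≤ AdvDSfam P :=
  le_csSup ⟨1, by rintro _ ⟨u₀, u₁, v, rfl⟩; exact SD_le_one (hP v u₀) (hP v u₁)⟩
    ⟨u₀, u₁, v, rfl⟩

end Advantage

theorem ds_implies_mis_general
    (U Z V : Type) [Fintype U] [Fintype Z]
    (P : V → U → Z → ℝ) (hP : ∀ v u, IsProbDist (P v u))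
    (hZ : 3 ≤ Fintype.card Z) :
    AdvMISfam P ≤
        2 * AdvDSfam P * Real.log ((Fintype.card Z : ℝ) / AdvDSfam P) ∧
    ∀ (pU : U → ℝ), IsProbDist pU → ∀ v : V,
      mutualInfo pU (fun u => P v u) ≤
        2 * AdvDSfam P * Real.log ((Fintype.card Z : ℝ) / AdvDSfam P) := by
  have h_mi : ∀ (pU : U → ℝ), IsProbDist pU → ∀ v : V, mutualInfo pU (fun u => P v u) ≤
      2 * AdvDSfam P * Real.log ((Fintype.card Z : ℝ) / AdvDSfam P) := fun pU hpU v =>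
    mutualInfo_le_of_SD_le hpU (hP v) hZ (AdvDSfam_le_one hP) (SD_le_AdvDSfam hP v)
  -- needed by `Real.sSup_le` because of the junk value `sSup ∅ = 0`; it is the case `δ = 0`
  have h_nonneg : 0 ≤ 2 * AdvDSfam P * Real.log ((Fintype.card Z : ℝ) / AdvDSfam P) := by
    simpa using mul_log_add_negMulLog_add_self_le le_rfl AdvDSfam_nonneg (AdvDSfam_le_one hP)
      (one_le_log_of_three_le (by exact_mod_cast hZ))
  exact ⟨Real.sSup_le (by rintro _ ⟨pU, hpU, v, rfl⟩; exact h_mi pU hpU v) h_nonneg, h_mi⟩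

/-- **Distinguishing security implies mutual-information security.**
If `|𝒵| ≥ 3` and `ε := Adv^DS > 0`, then `Adv^MIS ≤ 2·ε·ln(|𝒵|/ε)`; that is, for every
message distribution `pU` and every `V ∈ 𝒱`, `I(U;Z_V) ≤ 2·ε·ln(|𝒵|/ε)`. -/
theorem ds_implies_mis
    (U Z V : Type) [Fintype U] [Fintype Z] [Fintype V]
    [Nonempty U] [Nonempty Z] [Nonempty V]
    (P : V → U → Z → ℝ) (hP : ∀ v u, IsProbDist (P v u))
    (hZ : 3 ≤ Fintype.card Z) (hε : 0 < AdvDSfam P) :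
    AdvMISfam P ≤
        2 * AdvDSfam P * Real.log ((Fintype.card Z : ℝ) / AdvDSfam P) ∧
    ∀ (pU : U → ℝ), IsProbDist pU → ∀ v : V,
      mutualInfo pU (fun u => P v u) ≤
        2 * AdvDSfam P * Real.log ((Fintype.card Z : ℝ) / AdvDSfam P) :=
  ds_implies_mis_general U Z V P hP hZ
end
end

section
/- Let X₁, …, X_K be independent identically distributed real random variables with 0 ≤ X_k ≤ δ almost surely (for some δ > 0) and E[X₁] ≤ μ. Then for every real A, Pr{ Σ_{k=1}^K X_k > A } ≤ exp( −δ⁻¹·(A − e·K·μ) ), where e is Euler's number. -/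
/-!
Chernoff's method with the parameter `t = δ⁻¹`. On `[0, 1]` the exponential lies below its chord,
`exp s ≤ 1 + (e - 1) s`, so a variable with values in `[0, δ]` has
`E[exp (X / δ)] ≤ 1 + (e - 1) E[X] / δ ≤ exp ((e - 1) E[X] / δ)`. Independence multiplies these
bounds over the `K` summands, and Markov's inequality for `exp (S / δ)` gives the tail bound.
-/

open MeasureTheory ProbabilityTheory Real Set

lemma Real.exp_le_one_add_mul_of_mem_Icc {s : ℝ} (hs : s ∈ Icc (0 : ℝ) 1) :
    exp s ≤ 1 + (exp 1 - 1) * s := by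
  have := convexOn_exp.2 (mem_univ 0) (mem_univ 1) (sub_nonneg.2 hs.2) hs.1 (sub_add_cancel 1 s)
  simp only [smul_eq_mul, mul_zero, mul_one, zero_add, exp_zero] at this
  linarith

namespace ProbabilityTheory

variable {Ω : Type*} [MeasurableSpace Ω] {P : Measure Ω} [IsProbabilityMeasure P]

lemma mgf_inv_le_exp_integral_of_mem_Icc {X : Ω → ℝ} {δ : ℝ} (hX : AEMeasurable X P)
    (hbdd : ∀ᵐ ω ∂P, X ω ∈ Icc 0 δ) :
    mgf X P δ⁻¹ ≤ exp ((exp 1 - 1) * δ⁻¹ * P[X]) := by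
  set c := (exp 1 - 1) * δ⁻¹
  have hX_int : Integrable X P := .of_mem_Icc 0 δ hX hbdd
  have h_chord : ∀ᵐ ω ∂P, exp (δ⁻¹ * X ω) ≤ 1 + c * X ω := by
    filter_upwards [hbdd] with ω hω
    have hδ : 0 ≤ δ := hω.1.trans hω.2
    calc exp (δ⁻¹ * X ω) ≤ 1 + (exp 1 - 1) * (δ⁻¹ * X ω) :=
          exp_le_one_add_mul_of_mem_Icc
            ⟨mul_nonneg (inv_nonneg.2 hδ) hω.1, inv_mul_le_one_of_le₀ hω.2 hδ⟩
      _ = 1 + c * X ω := by ring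
  calc mgf X P δ⁻¹ ≤ ∫ ω, 1 + c * X ω ∂P :=
        integral_mono_ae (integrable_exp_mul_of_mem_Icc hX hbdd)
          ((integrable_const 1).add (hX_int.const_mul c)) h_chord
    _ = 1 + c * P[X] := by
        rw [integral_add (integrable_const 1) (hX_int.const_mul c), integral_const_mul]
        simp
    _ ≤ exp (c * P[X]) := by linarith [add_one_le_exp (c * P[X])]

lemma mgf_sum_inv_le_exp_of_identDistrib {ι : Type*} [Fintype ι] {X : ι → Ω → ℝ} {j : ι}
    {δ : ℝ} (hindep : iIndepFun X P) (hident : ∀ i, IdentDistrib (X i) (X j) P P)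
    (hbdd : ∀ᵐ ω ∂P, X j ω ∈ Icc 0 δ) :
    mgf (∑ i, X i) P δ⁻¹ ≤ exp (Fintype.card ι * ((exp 1 - 1) * δ⁻¹ * P[X j])) := by
  have hmeas i : AEMeasurable (X i) P := (hident i).aemeasurable_fst
  rw [mgf_sum_of_identDistrib₀ hmeas hindep (fun i _ k _ ↦ (hident i).trans (hident k).symm)
    (Finset.mem_univ j), Finset.card_univ, exp_nat_mul]
  exact pow_le_pow_left₀ mgf_nonneg (mgf_inv_le_exp_integral_of_mem_Icc (hmeas j) hbdd) _

end ProbabilityTheory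

theorem iid_bounded_sum_tail_bound_general
    {Ω : Type*} [MeasurableSpace Ω] (P : Measure Ω) [IsProbabilityMeasure P]
    (K : ℕ) (hK : 0 < K) (X : Fin K → Ω → ℝ) (δ μ A : ℝ)
    (hindep : iIndepFun X P)
    (hident : ∀ k, IdentDistrib (X k) (X ⟨0, hK⟩) P P)
    (hbdd : ∀ k, ∀ᵐ ω ∂P, X k ω ∈ Set.Icc (0:ℝ) δ)
    (hmean : (∫ ω, X ⟨0, hK⟩ ω ∂P) ≤ μ) :
    (P {ω | A < ∑ k, X k ω}).toReal ≤
      Real.exp (-(δ⁻¹ * (A - Real.exp 1 * K * μ))) := by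
  set X₀ := X ⟨0, hK⟩
  obtain ⟨ω₀, hω₀⟩ := (hbdd ⟨0, hK⟩).exists
  have hδ : 0 ≤ δ := hω₀.1.trans hω₀.2
  have hmeas k : AEMeasurable (X k) P := (hident k).aemeasurable_fst
  have h_mgf : mgf (∑ k, X k) P δ⁻¹ ≤ exp (δ⁻¹ * (exp 1 * K * μ)) := by
    refine (mgf_sum_inv_le_exp_of_identDistrib hindep hident (hbdd _)).trans (exp_le_exp.2 ?_)
    have hX₀_nonneg : 0 ≤ P[X₀] := integral_nonneg_of_ae ((hbdd _).mono fun _ h ↦ h.1)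
    have : (exp 1 - 1) * P[X₀] ≤ exp 1 * μ :=
      mul_le_mul (by linarith) hmean hX₀_nonneg (exp_pos 1).le
    simp only [Fintype.card_fin]
    nlinarith [mul_nonneg (Nat.cast_nonneg (α := ℝ) K) (inv_nonneg.2 hδ)]
  have h_int : Integrable (fun ω ↦ exp (δ⁻¹ * (∑ k, X k) ω)) P := by
    refine integrable_exp_mul_of_le _ (K * δ) (inv_nonneg.2 hδ)
      (Finset.aemeasurable_sum _ fun k _ ↦ hmeas k) ?_
    filter_upwards [ae_all_iff.2 hbdd] with ω hω
    simpa using Finset.sum_le_sum fun k (_ : k ∈ Finset.univ) ↦ (hω k).2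
  calc P.real {ω | A < ∑ k, X k ω} ≤ P.real {ω | A ≤ (∑ k, X k) ω} :=
        measureReal_mono fun ω hω ↦ by simpa using le_of_lt hω
    _ ≤ exp (-δ⁻¹ * A) * mgf (∑ k, X k) P δ⁻¹ :=
        measure_ge_le_exp_mul_mgf A (inv_nonneg.2 hδ) h_int
    _ ≤ exp (-δ⁻¹ * A) * exp (δ⁻¹ * (exp 1 * K * μ)) := by gcongr
    _ = exp (-(δ⁻¹ * (A - exp 1 * K * μ))) := by rw [← exp_add]; ring_nf

/-- **Statement 13.** Let `X₁, …, X_K` be i.i.d. real random variables with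
`0 ≤ X_k ≤ δ` almost surely and `E[X₁] ≤ μ`. Then for every real `A`,
`Pr{ Σ_k X_k > A } ≤ exp( −δ⁻¹·(A − e·K·μ) )`. -/
theorem iid_bounded_sum_tail_bound
    {Ω : Type*} [MeasurableSpace Ω] (P : Measure Ω) [IsProbabilityMeasure P]
    (K : ℕ) (hK : 0 < K) (X : Fin K → Ω → ℝ) (δ μ A : ℝ) (hδ : 0 < δ)
    (hmeas : ∀ k, Measurable (X k))
    (hindep : iIndepFun X P)
    (hident : ∀ k, IdentDistrib (X k) (X ⟨0, hK⟩) P P)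
    (hbdd : ∀ k, ∀ᵐ ω ∂P, X k ω ∈ Set.Icc (0:ℝ) δ)
    (hmean : (∫ ω, X ⟨0, hK⟩ ω ∂P) ≤ μ) :
    (P {ω | A < ∑ k, X k ω}).toReal ≤
      Real.exp (-(δ⁻¹ * (A - Real.exp 1 * K * μ))) :=
  iid_bounded_sum_tail_bound_general P K hK X δ μ A hindep hident hbdd hmean
end
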